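/- Let (X,d) be a metric space, let p ≥ 1 be a real number, and let k ≥ 1 be an integer. For all finitely supported probability measures μ, ν, ζ on X, the latent Wasserstein discrepancy satisfies the relaxed triangle inequality W_p^L(μ,ν) ≤ 4^{1−1/p}·(W_p^L(μ,ζ) + W_p^L(ζ,ν)). -/

import Mathlib

open scoped BigOperators

/-- A finitely supported probability measure on `X`, given by its weight
function (nonnegative, finite support, total mass one). -/
structure FinProb (X : Type*) where
  w : X → ℝ
  nonneg : ∀ x, 0 ≤ w x
  finite : (Function.support w).Finite
  total : ∑ᶠ x, w x = 1

variable {X : Type*} [MetricSpace X]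

/-- `P` is a coupling of `α` and `β`: entrywise nonnegative, finitely
supported, with row marginals `α` and column marginals `β`. -/
def IsCoupling (α β : FinProb X) (P : X → X → ℝ) : Prop :=
  (∀ x y, 0 ≤ P x y) ∧ (Function.support (Function.uncurry P)).Finite ∧
  (∀ x, ∑ᶠ y, P x y = α.w x) ∧ (∀ y, ∑ᶠ x, P x y = β.w y)

/-- The transport cost `Σ_{x,y} d(x,y)^p · P x y` of a plan `P` (real exponent `p`). -/
noncomputable def transportCost (p : ℝ) (P : X → X → ℝ) : ℝ :=
  ∑ᶠ x, ∑ᶠ y, dist x y ^ p * P x y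

/-- `W_p^p(α,β)`: the optimal transport cost with ground cost `d^p` between
finitely supported probability measures. -/
noncomputable def Wpp (p : ℝ) (α β : FinProb X) : ℝ :=
  sInf {c : ℝ | ∃ P : X → X → ℝ, IsCoupling α β P ∧ c = transportCost p P}

/-- The latent optimal transport cost with (at most) `k` anchors on each side:
`OT^L(μ,ν) = inf { W_p^p(μ,μ_z) + W_p^p(μ_z,ν_z) + W_p^p(ν_z,ν) }`, the infimum
over finitely supported probability measures `μ_z, ν_z` supported on at most
`k` points. -/
noncomputable def OTL (p : ℝ) (k : ℕ) (μ ν : FinProb X) : ℝ :=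
  sInf {c : ℝ | ∃ μz νz : FinProb X,
    μz.finite.toFinset.card ≤ k ∧ νz.finite.toFinset.card ≤ k ∧
    c = Wpp p μ μz + Wpp p μz νz + Wpp p νz ν}

/-- The latent Wasserstein discrepancy `W_p^L := (OT^L)^(1/p)`. -/
noncomputable def WpL (p : ℝ) (k : ℕ) (μ ν : FinProb X) : ℝ :=
  OTL p k μ ν ^ (1 / p)

/-!
Gluing an `α`–`β` plan `P` with a `β`–`γ` plan `Q` along `β` gives the `α`–`γ` plan
`∑_y P x y Q y z / β y`, and `d(x,z)^p ≤ 2^(p-1) (d(x,y)^p + d(y,z)^p)` bounds its cost, so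
`W_p^p` satisfies the triangle inequality up to the factor `2^(p-1)`. Given anchors
`μ → μ_z → ζ_z → ζ` and `ζ → ζ_z' → ν_z' → ν`, keep `μ_z` and `ν_z'` as anchors for `(μ, ν)` and
bound `W_p^p(μ_z, ν_z')` by chaining through `ζ_z, ζ, ζ_z'`, at the cost of a factor
`2^(p-1) · 2^(p-1) = 4^(p-1)`; then pass to the infima. Taking `p`-th roots, with
`(a + b)^(1/p) ≤ a^(1/p) + b^(1/p)`, gives the constant `4^(1-1/p)`.
-/

open Finset

lemma le_mul_csInf_add_csInf {K c : ℝ} {s t : Set ℝ} (hK : 0 < K) (hs : s.Nonempty)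
    (ht : t.Nonempty) (h : ∀ a ∈ s, ∀ b ∈ t, c ≤ K * (a + b)) : c ≤ K * (sInf s + sInf t) := by
  have hst : ∀ b ∈ t, c / K - b ≤ sInf s := fun b hb =>
    le_csInf hs fun a ha => by rw [sub_le_iff_le_add, div_le_iff₀' hK]; exact h a ha b hb
  have : c / K - sInf s ≤ sInf t :=
    le_csInf ht fun b hb => by linarith [hst b hb]
  rw [← div_le_iff₀' hK]
  linarith

lemma rpow_one_div_le_of_le_mul_add {p C a b c : ℝ} (hp : 1 ≤ p) (hC : 0 ≤ C) (ha : 0 ≤ a)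
    (hb : 0 ≤ b) (hc : 0 ≤ c) (h : a ≤ C * (b + c)) :
    a ^ (1 / p) ≤ C ^ (1 / p) * (b ^ (1 / p) + c ^ (1 / p)) := by
  have hq : 0 ≤ 1 / p := by positivity
  calc a ^ (1 / p) ≤ (C * (b + c)) ^ (1 / p) := by gcongr
    _ = C ^ (1 / p) * (b + c) ^ (1 / p) := Real.mul_rpow hC (by positivity)
    _ ≤ C ^ (1 / p) * (b ^ (1 / p) + c ^ (1 / p)) := by
      gcongr
      exact Real.rpow_add_le_add_rpow hb hc hq (div_le_one_of_le₀ hp (by positivity))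

section Coupling

variable {X : Type*}

namespace IsCoupling

variable {α β : FinProb X} {P : X → X → ℝ}

lemma nonneg (h : IsCoupling α β P) (x y : X) : 0 ≤ P x y := h.1 x y

lemma le_left (h : IsCoupling α β P) (x y : X) : P x y ≤ α.w x := by
  rw [← h.2.2.1 x]
  exact single_le_finsum y ((h.2.1.image Prod.snd).subset fun y hy => ⟨(x, y), hy, rfl⟩) (h.1 x)

lemma le_right (h : IsCoupling α β P) (x y : X) : P x y ≤ β.w y := by
  rw [← h.2.2.2 y]
  exact single_le_finsum x ((h.2.1.image Prod.fst).subset fun x hx => ⟨(x, y), hx, rfl⟩) (h.1 · y)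

lemma eq_zero_of_left (h : IsCoupling α β P) {x : X} (hx : α.w x = 0) (y : X) : P x y = 0 :=
  le_antisymm (hx ▸ h.le_left x y) (h.nonneg x y)

lemma eq_zero_of_right (h : IsCoupling α β P) {y : X} (hy : β.w y = 0) (x : X) : P x y = 0 :=
  le_antisymm (hy ▸ h.le_right x y) (h.nonneg x y)

lemma mem_supp (h : IsCoupling α β P) {x y : X} (hxy : P x y ≠ 0) :
    x ∈ α.finite.toFinset ∧ y ∈ β.finite.toFinset :=
  ⟨(Set.Finite.mem_toFinset _).2 fun hx => hxy (h.eq_zero_of_left hx y),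
    (Set.Finite.mem_toFinset _).2 fun hy => hxy (h.eq_zero_of_right hy x)⟩

lemma sum_right (h : IsCoupling α β P) {s : Finset X} (hs : β.finite.toFinset ⊆ s) (x : X) :
    ∑ y ∈ s, P x y = α.w x := by
  rw [← h.2.2.1 x, finsum_eq_sum_of_support_subset _ fun y hy => hs (h.mem_supp hy).2]

lemma sum_left (h : IsCoupling α β P) {s : Finset X} (hs : α.finite.toFinset ⊆ s) (y : X) :
    ∑ x ∈ s, P x y = β.w y := by
  rw [← h.2.2.2 y, finsum_eq_sum_of_support_subset _ fun x hx => hs (h.mem_supp hx).1]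

end IsCoupling

lemma isCoupling_mul (α β : FinProb X) : IsCoupling α β fun x y => α.w x * β.w y := by
  refine ⟨fun x y => mul_nonneg (α.nonneg x) (β.nonneg y), ?_, fun x => ?_, fun y => ?_⟩
  · refine (α.finite.prod β.finite).subset fun xy hxy => ?_
    exact ⟨left_ne_zero_of_mul hxy, right_ne_zero_of_mul hxy⟩
  · rw [← mul_finsum, β.total, mul_one]
  · rw [← finsum_mul, α.total, one_mul]

section Gluing

variable {α β γ : FinProb X} {P Q : X → X → ℝ}

/-- Where `β.w y = 0`, the junk value `_ / 0 = 0` agrees with `P x y = Q y z = 0`. -/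
noncomputable def gluePlan (β : FinProb X) (P Q : X → X → ℝ) (x y z : X) : ℝ :=
  P x y * Q y z / β.w y

noncomputable def glue (β : FinProb X) (P Q : X → X → ℝ) (x z : X) : ℝ :=
  ∑ y ∈ β.finite.toFinset, gluePlan β P Q x y z

lemma gluePlan_nonneg (hP : IsCoupling α β P) (hQ : IsCoupling β γ Q) (x y z : X) :
    0 ≤ gluePlan β P Q x y z :=
  div_nonneg (mul_nonneg (hP.nonneg x y) (hQ.nonneg y z)) (β.nonneg y)

lemma sum_gluePlan_right (hP : IsCoupling α β P) (hQ : IsCoupling β γ Q) {s : Finset X}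
    (hs : γ.finite.toFinset ⊆ s) (x y : X) : ∑ z ∈ s, gluePlan β P Q x y z = P x y := by
  simp only [gluePlan, ← sum_div, ← mul_sum, hQ.sum_right hs]
  rcases eq_or_ne (β.w y) 0 with hy | hy
  · simp [hy, hP.eq_zero_of_right hy]
  · exact mul_div_cancel_right₀ _ hy

lemma sum_gluePlan_left (hP : IsCoupling α β P) (hQ : IsCoupling β γ Q) {s : Finset X}
    (hs : α.finite.toFinset ⊆ s) (y z : X) : ∑ x ∈ s, gluePlan β P Q x y z = Q y z := by
  simp only [gluePlan, ← sum_div, ← sum_mul, hP.sum_left hs]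
  rcases eq_or_ne (β.w y) 0 with hy | hy
  · simp [hy, hQ.eq_zero_of_left hy]
  · exact mul_div_cancel_left₀ _ hy

lemma glue_mem_supp (hP : IsCoupling α β P) (hQ : IsCoupling β γ Q) {x z : X}
    (h : glue β P Q x z ≠ 0) : x ∈ α.finite.toFinset ∧ z ∈ γ.finite.toFinset := by
  obtain ⟨y, -, hy⟩ := exists_ne_zero_of_sum_ne_zero h
  have hPQ := left_ne_zero_of_mul hy
  exact ⟨(hP.mem_supp (left_ne_zero_of_mul hPQ)).1, (hQ.mem_supp (right_ne_zero_of_mul hPQ)).2⟩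

lemma isCoupling_glue (hP : IsCoupling α β P) (hQ : IsCoupling β γ Q) :
    IsCoupling α γ (glue β P Q) := by
  refine ⟨fun x z => sum_nonneg fun y _ => gluePlan_nonneg hP hQ x y z, ?_, fun x => ?_,
    fun z => ?_⟩
  · refine (α.finite.toFinset ×ˢ γ.finite.toFinset).finite_toSet.subset fun xz hxz => ?_
    simpa using glue_mem_supp hP hQ hxz
  · rw [finsum_eq_sum_of_support_subset _ fun z hz => (glue_mem_supp hP hQ hz).2]
    simp only [glue]
    rw [sum_comm]
    simp only [sum_gluePlan_right hP hQ subset_rfl, hP.sum_right subset_rfl]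
  · rw [finsum_eq_sum_of_support_subset _ fun x hx => (glue_mem_supp hP hQ hx).1]
    simp only [glue]
    rw [sum_comm]
    simp only [sum_gluePlan_left hP hQ subset_rfl, hQ.sum_left subset_rfl]

end Gluing

end Coupling

lemma dist_rpow_le_two_rpow_mul {p : ℝ} (hp : 1 ≤ p) (x y z : X) :
    dist x z ^ p ≤ (2 : ℝ) ^ (p - 1) * (dist x y ^ p + dist y z ^ p) := by
  have h := NNReal.rpow_add_le_mul_rpow_add_rpow (nndist x y) (nndist y z) hp
  calc dist x z ^ p ≤ (dist x y + dist y z) ^ p := by gcongr; exact dist_triangle x y z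
    _ ≤ _ := by simpa [← coe_nndist] using NNReal.coe_le_coe.2 h

lemma transportCost_eq_sum {p : ℝ} {P : X → X → ℝ} {s t : Finset X}
    (h : ∀ x y, P x y ≠ 0 → x ∈ s ∧ y ∈ t) :
    transportCost p P = ∑ x ∈ s, ∑ y ∈ t, dist x y ^ p * P x y := by
  have hrow : ∀ x, ∑ᶠ y, dist x y ^ p * P x y = ∑ y ∈ t, dist x y ^ p * P x y := fun x =>
    finsum_eq_sum_of_support_subset _ fun y hy => (h x y (right_ne_zero_of_mul hy)).2
  rw [transportCost, finsum_congr hrow]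
  refine finsum_eq_sum_of_support_subset _ fun x hx => ?_
  obtain ⟨y, -, hy⟩ := exists_ne_zero_of_sum_ne_zero hx
  exact (h x y (right_ne_zero_of_mul hy)).1

lemma transportCost_nonneg {p : ℝ} {P : X → X → ℝ} (hP : ∀ x y, 0 ≤ P x y) :
    0 ≤ transportCost p P :=
  finsum_nonneg fun x => finsum_nonneg fun y => mul_nonneg (by positivity) (hP x y)

section Wpp

variable {p : ℝ} {α β γ : FinProb X} {P Q : X → X → ℝ}

lemma Wpp_nonneg (p : ℝ) (α β : FinProb X) : 0 ≤ Wpp p α β :=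
  Real.sInf_nonneg fun _ ⟨_, hP, hc⟩ => hc ▸ transportCost_nonneg hP.1

lemma Wpp_le_transportCost (h : IsCoupling α β P) : Wpp p α β ≤ transportCost p P :=
  csInf_le ⟨0, fun _ ⟨_, hP, hc⟩ => hc ▸ transportCost_nonneg hP.1⟩ ⟨P, h, rfl⟩

lemma transportCost_glue_le (hp : 1 ≤ p) (hP : IsCoupling α β P) (hQ : IsCoupling β γ Q) :
    transportCost p (glue β P Q) ≤
      (2 : ℝ) ^ (p - 1) * (transportCost p P + transportCost p Q) := by
  set m := gluePlan β P Q
  set sα := α.finite.toFinset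
  set sβ := β.finite.toFinset
  set sγ := γ.finite.toFinset
  have hleft : ∀ x y, ∑ z ∈ sγ, dist x y ^ p * m x y z = dist x y ^ p * P x y :=
    fun x y => by rw [← mul_sum, sum_gluePlan_right hP hQ subset_rfl]
  have hright : ∀ y z, ∑ x ∈ sα, dist y z ^ p * m x y z = dist y z ^ p * Q y z :=
    fun y z => by rw [← mul_sum, sum_gluePlan_left hP hQ subset_rfl]
  calc transportCost p (glue β P Q)
      = ∑ y ∈ sβ, ∑ x ∈ sα, ∑ z ∈ sγ, dist x z ^ p * m x y z := by
        rw [transportCost_eq_sum fun _ _ => glue_mem_supp hP hQ]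
        simp only [glue, mul_sum]
        exact (sum_congr rfl fun x _ => sum_comm).trans sum_comm
    _ ≤ (2 : ℝ) ^ (p - 1) * (∑ y ∈ sβ, ∑ x ∈ sα, ∑ z ∈ sγ, dist x y ^ p * m x y z
          + ∑ y ∈ sβ, ∑ x ∈ sα, ∑ z ∈ sγ, dist y z ^ p * m x y z) := by
        simp only [mul_sum, ← sum_add_distrib]
        refine sum_le_sum fun y _ => sum_le_sum fun x _ => sum_le_sum fun z _ => ?_
        rw [← add_mul, ← mul_assoc]
        exact mul_le_mul_of_nonneg_right (dist_rpow_le_two_rpow_mul hp x y z)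
          (gluePlan_nonneg hP hQ x y z)
    _ = (2 : ℝ) ^ (p - 1) * (transportCost p P + transportCost p Q) := by
        rw [transportCost_eq_sum fun _ _ => hP.mem_supp,
          transportCost_eq_sum fun _ _ => hQ.mem_supp, sum_comm (s := sα)]
        simp only [hleft]
        congr 2
        exact sum_congr rfl fun y _ => sum_comm.trans (sum_congr rfl fun z _ => hright y z)

lemma Wpp_le_two_rpow_mul_add (hp : 1 ≤ p) (α β γ : FinProb X) :
    Wpp p α γ ≤ (2 : ℝ) ^ (p - 1) * (Wpp p α β + Wpp p β γ) := by
  refine le_mul_csInf_add_csInf (by positivity) ⟨_, _, isCoupling_mul α β, rfl⟩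
    ⟨_, _, isCoupling_mul β γ, rfl⟩ ?_
  rintro _ ⟨P, hP, rfl⟩ _ ⟨Q, hQ, rfl⟩
  exact (Wpp_le_transportCost (isCoupling_glue hP hQ)).trans (transportCost_glue_le hp hP hQ)

lemma Wpp_le_four_rpow_mul_add (hp : 1 ≤ p) (α β γ δ ε : FinProb X) :
    Wpp p α ε ≤ (4 : ℝ) ^ (p - 1) * (Wpp p α β + Wpp p β γ + Wpp p γ δ + Wpp p δ ε) := by
  have h4 : (4 : ℝ) ^ (p - 1) = (2 : ℝ) ^ (p - 1) * (2 : ℝ) ^ (p - 1) := by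
    rw [← Real.mul_rpow] <;> norm_num
  calc Wpp p α ε ≤ (2 : ℝ) ^ (p - 1) * (Wpp p α γ + Wpp p γ ε) :=
        Wpp_le_two_rpow_mul_add hp α γ ε
    _ ≤ (2 : ℝ) ^ (p - 1) * ((2 : ℝ) ^ (p - 1) * (Wpp p α β + Wpp p β γ)
          + (2 : ℝ) ^ (p - 1) * (Wpp p γ δ + Wpp p δ ε)) := by
        gcongr
        exacts [Wpp_le_two_rpow_mul_add hp α β γ, Wpp_le_two_rpow_mul_add hp γ δ ε]
    _ = (4 : ℝ) ^ (p - 1) * (Wpp p α β + Wpp p β γ + Wpp p γ δ + Wpp p δ ε) := by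
        rw [h4]; ring

end Wpp

section OTL

variable {p : ℝ} {k : ℕ}

lemma OTL_nonneg (p : ℝ) (k : ℕ) (μ ν : FinProb X) : 0 ≤ OTL p k μ ν :=
  Real.sInf_nonneg fun _ ⟨μz, νz, _, _, hc⟩ => hc ▸
    add_nonneg (add_nonneg (Wpp_nonneg p μ μz) (Wpp_nonneg p μz νz)) (Wpp_nonneg p νz ν)

lemma OTL_le {μ ν μz νz : FinProb X} (hμz : μz.finite.toFinset.card ≤ k)
    (hνz : νz.finite.toFinset.card ≤ k) :
    OTL p k μ ν ≤ Wpp p μ μz + Wpp p μz νz + Wpp p νz ν :=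
  csInf_le ⟨0, fun _ ⟨μz, νz, _, _, hc⟩ => hc ▸
    add_nonneg (add_nonneg (Wpp_nonneg p μ μz) (Wpp_nonneg p μz νz)) (Wpp_nonneg p νz ν)⟩
    ⟨μz, νz, hμz, hνz, rfl⟩

lemma OTL_eq_zero_of_forall_card_gt (h : ∀ η : FinProb X, k < η.finite.toFinset.card)
    (μ ν : FinProb X) : OTL p k μ ν = 0 := by
  have hempty : ∀ c, c ∉ {c : ℝ | ∃ μz νz : FinProb X, μz.finite.toFinset.card ≤ k ∧
      νz.finite.toFinset.card ≤ k ∧ c = Wpp p μ μz + Wpp p μz νz + Wpp p νz ν} :=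
    fun _ ⟨μz, _, hμz, _⟩ => (h μz).not_ge hμz
  rw [OTL, Set.eq_empty_of_forall_notMem hempty, Real.sInf_empty]

lemma OTL_le_four_rpow_mul_add (hp : 1 ≤ p) (μ ν ζ : FinProb X) :
    OTL p k μ ν ≤ (4 : ℝ) ^ (p - 1) * (OTL p k μ ζ + OTL p k ζ ν) := by
  by_cases hk : ∀ η : FinProb X, k < η.finite.toFinset.card
  · rw [OTL_eq_zero_of_forall_card_gt hk]
    exact mul_nonneg (by positivity) (add_nonneg (OTL_nonneg p k μ ζ) (OTL_nonneg p k ζ ν))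
  obtain ⟨η, hη⟩ := not_forall.1 hk
  rw [not_lt] at hη
  refine le_mul_csInf_add_csInf (by positivity) ⟨_, η, η, hη, hη, rfl⟩ ⟨_, η, η, hη, hη, rfl⟩ ?_
  rintro _ ⟨μz, ζz, hμz, -, rfl⟩ _ ⟨ζz', νz, -, hνz, rfl⟩
  have hK : 1 ≤ (4 : ℝ) ^ (p - 1) := Real.one_le_rpow (by norm_num) (by linarith)
  have hμ := le_mul_of_one_le_left (Wpp_nonneg p μ μz) hK
  have hν := le_mul_of_one_le_left (Wpp_nonneg p νz ν) hK
  have hmid := Wpp_le_four_rpow_mul_add hp μz ζz ζ ζz' νz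
  linarith [OTL_le (p := p) (μ := μ) (ν := ν) hμz hνz]

end OTL

theorem latent_wasserstein_relaxed_triangle_general (p : ℝ) (hp : 1 ≤ p) (k : ℕ)
    (μ ν ζ : FinProb X) :
    WpL p k μ ν ≤ (4 : ℝ) ^ (1 - 1 / p) * (WpL p k μ ζ + WpL p k ζ ν) := by
  have h4 : (4 : ℝ) ^ (1 - 1 / p) = ((4 : ℝ) ^ (p - 1)) ^ (1 / p) := by
    rw [← Real.rpow_mul (by norm_num)]
    congr 1
    field_simp
  rw [h4]
  exact rpow_one_div_le_of_le_mul_add hp (by positivity) (OTL_nonneg p k μ ν) (OTL_nonneg p k μ ζ)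
    (OTL_nonneg p k ζ ν) (OTL_le_four_rpow_mul_add hp μ ν ζ)

/-- Relaxed triangle inequality for the latent Wasserstein discrepancy:
`W_p^L(μ,ν) ≤ 4^(1−1/p)·(W_p^L(μ,ζ) + W_p^L(ζ,ν))`. -/
theorem latent_wasserstein_relaxed_triangle (p : ℝ) (hp : 1 ≤ p) (k : ℕ) (hk : 1 ≤ k)
    (μ ν ζ : FinProb X) :
    WpL p k μ ν ≤ (4 : ℝ) ^ (1 - 1 / p) * (WpL p k μ ζ + WpL p k ζ ν) :=
  latent_wasserstein_relaxed_triangle_general p hp k μ ν ζ
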